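/- Let G be a finite abelian group and a_1,…,a_k an arbitrary sequence of elements of G. Then the abelian group 𝒢(a_1,…,a_k) is generated by {m ∈ ℬ(a_1,…,a_k) : |m| ≤ d*(G) + 1}. -/

import Mathlib

/-- For a sequence `a : Fin k → G` in an additive abelian group, this says that the
abelian group `𝓖(a_1,…,a_k) = {m ∈ ℤ^k : Σ m_i • a_i = 0}` is generated by the set
`{m ∈ 𝓑(a_1,…,a_k) : |m| ≤ d}` of zero-sum vectors `m ∈ ℕ^k` of length at most `d`. -/
def ZeroSumGeneratedBy {G : Type*} [AddCommGroup G] {k : ℕ} (a : Fin k → G) (d : ℕ) : Prop :=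
  (↑(AddSubgroup.closure ((fun (m : Fin k → ℕ) (i : Fin k) => ((m i : ℤ))) ''
      {m : Fin k → ℕ | (∑ i, m i • a i = 0) ∧ ∑ i, m i ≤ d})) : Set (Fin k → ℤ))
    = {m : Fin k → ℤ | ∑ i, m i • a i = 0}

/-!
Let `c_t` be the index of `⟨a_s : s < t⟩` in `⟨a_s : s ≤ t⟩` (`chainIndex`). Writing `c_k • a_k`
as a combination of the earlier terms with digits `v_s < c_s` gives a zero-sum vector `w` with
last coordinate `c_k` and length at most `∑ (c_t - 1) + 1`. Every `m ∈ 𝓖(a)` has `c_k ∣ m_k`,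
so subtracting a multiple of `w` kills the last coordinate, and induction on the length shows
that `𝓖(a)` is generated by zero-sum vectors of length at most `∑ (c_t - 1) + 1`.

It remains to show `∑ (c_t - 1) ≤ d*(G)`. The product of any `j` of the `c_t` is at most the
order of a `j`-generated subgroup of `G ≅ ⊕ ℤ/n_i`, hence at most `n_1 ⋯ n_j`. So the
decreasingly sorted `c_t` are log-majorized by the `n_i`, which bounds their sums (Tomić–Weyl).
-/

open Finset

theorem sum_range_le_sum_range_of_prod_range_le {M : ℕ} {x y : ℕ → ℝ}
    (hx : ∀ i < M, 0 < x i) (hy : ∀ i < M, 0 < y i)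
    (hanti : ∀ i j, i ≤ j → j < M → x j ≤ x i)
    (hprod : ∀ p ≤ M, ∏ i ∈ range p, x i ≤ ∏ i ∈ range p, y i) :
    ∑ i ∈ range M, x i ≤ ∑ i ∈ range M, y i := by
  set P : ℕ → ℝ := fun p => ∑ i ∈ range p, (Real.log (x i) - Real.log (y i))
  have hP : ∀ p ≤ M, P p ≤ 0 := fun p hp => by
    have hxp : ∀ i ∈ range p, x i ≠ 0 := fun i hi => (hx i (by grind)).ne'
    have hyp : ∀ i ∈ range p, 0 < y i := fun i hi => hy i (by grind)
    simp only [P, sum_sub_distrib, ← Real.log_prod hxp, ← Real.log_prod fun i hi => (hyp i hi).ne']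
    exact sub_nonpos.2 (Real.log_le_log (prod_pos fun i hi => (hx i (by grind))) (hprod p hp))
  -- Abel summation, run as an induction: the weights `x i` decrease and the partial sums `P p`
  -- of the log-differences are nonpositive.
  have key : ∀ p ≤ M, ∀ z, (∀ i < p, z ≤ x i) → ∑ i ∈ range p, (x i - y i) ≤ z * P p := by
    intro p
    induction p with
    | zero => simp [P]
    | succ p ih =>
      intro hp z hz
      have hxp := hx p hp
      have hyp := hy p hp
      have hlog : x p - y p ≤ x p * (Real.log (x p) - Real.log (y p)) := by
        have h := Real.one_sub_inv_le_log_of_pos (div_pos hxp hyp)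
        rw [Real.log_div hxp.ne' hyp.ne', inv_div] at h
        have := mul_le_mul_of_nonneg_left h hxp.le
        rwa [mul_sub, mul_one, mul_div_cancel₀ _ hxp.ne'] at this
      calc ∑ i ∈ range (p + 1), (x i - y i)
          = ∑ i ∈ range p, (x i - y i) + (x p - y p) := sum_range_succ _ _
        _ ≤ x p * P p + x p * (Real.log (x p) - Real.log (y p)) :=
          add_le_add (ih (by omega) _ fun i hi => hanti i p hi.le hp) hlog
        _ = x p * P (p + 1) := by simp only [P, sum_range_succ]; ring
        _ ≤ z * P (p + 1) := mul_le_mul_of_nonpos_right (hz p (by omega)) (hP _ hp)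
  have := key M le_rfl 0 fun i hi => (hx i hi).le
  rw [zero_mul, sum_sub_distrib] at this
  linarith

def padOne {k : ℕ} (f : Fin k → ℕ) (i : ℕ) : ℕ := if h : i < k then f ⟨i, h⟩ else 1

lemma padOne_pos {k : ℕ} {f : Fin k → ℕ} (hf : ∀ t, 0 < f t) (i : ℕ) : 0 < padOne f i := by
  unfold padOne; split_ifs <;> simp [hf]

lemma prod_range_padOne {k : ℕ} (f : Fin k → ℕ) (p : ℕ) :
    ∏ i ∈ range p, padOne f i = ∏ t : Fin k, if (t : ℕ) < p then f t else 1 := by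
  have hf : ∀ t : Fin k, f t = padOne f t := fun t => by simp [padOne]
  simp_rw [hf]
  rw [Fin.prod_univ_eq_prod_range (fun i => if i < p then padOne f i else 1), ← prod_filter]
  refine (prod_subset (fun i => by simp) fun i hi hi' => ?_).symm
  simp only [mem_filter, mem_range] at hi hi'
  simp [padOne, show ¬ i < k by omega]

lemma sum_range_padOne_sub_one {k M : ℕ} (f : Fin k → ℕ) (hM : k ≤ M) :
    ∑ i ∈ range M, (padOne f i - 1) = ∑ t, (f t - 1) := by
  have hf : ∀ t : Fin k, f t = padOne f t := fun t => by simp [padOne]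
  simp_rw [hf]
  rw [Fin.sum_univ_eq_sum_range (fun i => padOne f i - 1)]
  refine (sum_subset (range_subset_range.2 hM) fun i hi hi' => ?_).symm
  simp [padOne, show ¬ i < k by simpa using hi']

lemma sum_sub_one_le_of_prod_range_padOne_le {k r : ℕ} {c : Fin k → ℕ} {n : Fin r → ℕ}
    (hanti : Antitone c) (hc : ∀ t, 0 < c t) (hn : ∀ i, 0 < n i)
    (hprefix : ∀ p, ∏ i ∈ range p, padOne c i ≤ ∏ i ∈ range p, padOne n i) :
    ∑ t, (c t - 1) ≤ ∑ i, (n i - 1) := by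
  have hsum := sum_range_le_sum_range_of_prod_range_le (M := k + r)
    (x := fun i => (padOne c i : ℝ)) (y := fun i => (padOne n i : ℝ))
    (fun i _ => by exact_mod_cast padOne_pos hc i) (fun i _ => by exact_mod_cast padOne_pos hn i)
    (fun i j hij _ => by
      simp only [padOne, Nat.cast_le]
      split_ifs with hj hi hi
      · exact hanti (Fin.mk_le_mk.2 hij)
      · omega
      · exact hc _
      · rfl)
    (fun p _ => by exact_mod_cast hprefix p)
  have hsub : ∀ {f : ℕ → ℕ}, (∀ i, 0 < f i) →
      ∑ i ∈ range (k + r), (f i - 1) = ∑ i ∈ range (k + r), f i - (k + r) := fun hf => by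
    rw [sum_tsub_distrib _ fun i _ => hf i]; simp
  calc ∑ t, (c t - 1) = ∑ i ∈ range (k + r), (padOne c i - 1) :=
        (sum_range_padOne_sub_one _ (by omega)).symm
    _ = ∑ i ∈ range (k + r), padOne c i - (k + r) := hsub (padOne_pos hc)
    _ ≤ ∑ i ∈ range (k + r), padOne n i - (k + r) :=
        Nat.sub_le_sub_right (by exact_mod_cast hsum) _
    _ = ∑ i ∈ range (k + r), (padOne n i - 1) := (hsub (padOne_pos hn)).symm
    _ = ∑ i, (n i - 1) := sum_range_padOne_sub_one _ (by omega)

theorem sum_sub_one_le_of_forall_prod_le {k r : ℕ} {c : Fin k → ℕ} {n : Fin r → ℕ}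
    (hc : ∀ t, 0 < c t) (hn : ∀ i, 0 < n i)
    (H : ∀ S : Finset (Fin k), ∏ t ∈ S, c t ≤ ∏ i : Fin r, if (i : ℕ) < #S then n i else 1) :
    ∑ t, (c t - 1) ≤ ∑ i, (n i - 1) := by
  set σ := Tuple.sort (OrderDual.toDual ∘ c)
  rw [← Equiv.sum_comp σ (fun t => c t - 1)]
  refine sum_sub_one_le_of_prod_range_padOne_le
    (monotone_toDual_comp_iff.1 (Tuple.monotone_sort _)) (fun t => hc _) hn fun p => ?_
  set S := ({t | (t : ℕ) < p} : Finset (Fin k))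
  have hS : #(S.map σ.toEmbedding) ≤ p := by simp [S, Fin.card_filter_val_lt]
  calc ∏ i ∈ range p, padOne (c ∘ σ) i = ∏ t ∈ S.map σ.toEmbedding, c t := by
        rw [prod_range_padOne, prod_map, ← prod_filter]; rfl
    _ ≤ ∏ i : Fin r, if (i : ℕ) < #(S.map σ.toEmbedding) then n i else 1 := H _
    _ ≤ ∏ i : Fin r, if (i : ℕ) < p then n i else 1 :=
        prod_le_prod' fun i _ => by split_ifs <;> first | omega | exact hn i
    _ = ∏ i ∈ range p, padOne n i := (prod_range_padOne n p).symm

section ChainIndex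

open AddSubgroup

variable {G : Type*} [AddCommGroup G]

def prefixSpan {k : ℕ} (a : Fin k → G) (t : Fin k) : AddSubgroup G :=
  closure (a '' Set.Iio t)

noncomputable def chainIndex {k : ℕ} (a : Fin k → G) (t : Fin k) : ℕ :=
  addOrderOf (a t : G ⧸ prefixSpan a t)

lemma zsmul_mem_prefixSpan_iff {k : ℕ} (a : Fin k → G) (t : Fin k) (z : ℤ) :
    z • a t ∈ prefixSpan a t ↔ (chainIndex a t : ℤ) ∣ z := by
  rw [chainIndex, addOrderOf_dvd_iff_zsmul_eq_zero, ← QuotientAddGroup.mk_zsmul,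
    QuotientAddGroup.eq_zero_iff]

lemma nsmul_mem_prefixSpan_iff {k : ℕ} (a : Fin k → G) (t : Fin k) (c : ℕ) :
    c • a t ∈ prefixSpan a t ↔ chainIndex a t ∣ c := by
  rw [chainIndex, addOrderOf_dvd_iff_nsmul_eq_zero, ← QuotientAddGroup.mk_nsmul,
    QuotientAddGroup.eq_zero_iff]

lemma chainIndex_pos [Finite G] {k : ℕ} (a : Fin k → G) (t : Fin k) : 0 < chainIndex a t :=
  addOrderOf_pos _

lemma chainIndex_eq_of_prefixSpan_eq {j k : ℕ} {a : Fin k → G} {b : Fin j → G} {s : Fin j}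
    {t : Fin k} (h₁ : b s = a t) (h₂ : prefixSpan b s = prefixSpan a t) :
    chainIndex b s = chainIndex a t :=
  Nat.dvd_antisymm (by rw [← nsmul_mem_prefixSpan_iff, h₁, h₂, nsmul_mem_prefixSpan_iff])
    (by rw [← nsmul_mem_prefixSpan_iff, ← h₁, ← h₂, nsmul_mem_prefixSpan_iff])

lemma chainIndex_dvd_chainIndex_comp {j k : ℕ} (a : Fin k → G) {e : Fin j → Fin k}
    (he : StrictMono e) (s : Fin j) : chainIndex a (e s) ∣ chainIndex (a ∘ e) s := by
  rw [← nsmul_mem_prefixSpan_iff]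
  refine closure_mono ?_ ((nsmul_mem_prefixSpan_iff (a ∘ e) s _).2 dvd_rfl)
  rintro _ ⟨u, hu, rfl⟩
  exact ⟨e u, he hu, rfl⟩

lemma chainIndex_castSucc {k : ℕ} (a : Fin (k + 1) → G) (t : Fin k) :
    chainIndex (a ∘ Fin.castSucc) t = chainIndex a t.castSucc :=
  chainIndex_eq_of_prefixSpan_eq rfl (by
    rw [prefixSpan, prefixSpan, Set.image_comp, Fin.image_castSucc_Iio])

lemma prefixSpan_last {k : ℕ} (a : Fin (k + 1) → G) :
    prefixSpan a (Fin.last k) = closure (Set.range (a ∘ Fin.castSucc)) := by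
  rw [prefixSpan, Set.range_comp, Fin.range_castSucc]
  congr 2

lemma closure_range_fin_succ {k : ℕ} (a : Fin (k + 1) → G) :
    closure (Set.range a) =
      closure (Set.range (a ∘ Fin.castSucc)) ⊔ zmultiples (a (Fin.last k)) := by
  rw [zmultiples_eq_closure, ← AddSubgroup.closure_union]
  congr 1
  ext g
  simp [Fin.exists_fin_succ', eq_comm, or_comm]

lemma chainIndex_last_dvd_of_sum_eq_zero {k : ℕ} {a : Fin (k + 1) → G} {m : Fin (k + 1) → ℤ}
    (hm : ∑ i, m i • a i = 0) : (chainIndex a (Fin.last k) : ℤ) ∣ m (Fin.last k) := by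
  rw [← zsmul_mem_prefixSpan_iff, prefixSpan_last]
  rw [Fin.sum_univ_castSucc, add_eq_zero_iff_eq_neg'] at hm
  rw [hm]
  exact neg_mem (sum_mem fun t _ => zsmul_mem (subset_closure (Set.mem_range_self t)) _)

theorem exists_digits [Finite G] :
    ∀ {k : ℕ} (a : Fin k → G) {g : G}, g ∈ closure (Set.range a) →
      ∃ v : Fin k → ℕ, (∀ t, v t < chainIndex a t) ∧ ∑ t, v t • a t = g := by
  intro k
  induction k with
  | zero =>
    intro a g hg
    rw [Set.range_eq_empty, AddSubgroup.closure_empty, mem_bot] at hg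
    exact ⟨0, fun t => t.elim0, by simp [hg]⟩
  | succ k ih =>
    intro a g hg
    rw [closure_range_fin_succ, AddSubgroup.mem_sup] at hg
    obtain ⟨h, hh, _, ⟨z, rfl⟩, rfl⟩ := hg
    set c := chainIndex a (Fin.last k)
    have hc : (0 : ℤ) < c := by exact_mod_cast chainIndex_pos a _
    have hcmem : c • a (Fin.last k) ∈ closure (Set.range (a ∘ Fin.castSucc)) := by
      rw [← prefixSpan_last, nsmul_mem_prefixSpan_iff]
    obtain ⟨v, hv, hvsum⟩ := ih (a ∘ Fin.castSucc) (add_mem hh (zsmul_mem hcmem (z / c)))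
    have hρ : (((z % c).toNat : ℕ) : ℤ) = z % c := Int.toNat_of_nonneg (Int.emod_nonneg _ hc.ne')
    refine ⟨Fin.snoc v (z % c).toNat, fun t => ?_, ?_⟩
    · induction t using Fin.lastCases with
      | last =>
        have := Int.emod_lt_of_pos z hc
        simp only [Fin.snoc_last]
        omega
      | cast t => simpa [← chainIndex_castSucc] using hv t
    · simp only [Fin.sum_univ_castSucc, Fin.snoc_castSucc, Fin.snoc_last]
      simp only [Function.comp_apply] at hvsum
      rw [hvsum, ← natCast_zsmul _ (z % c).toNat, hρ, ← natCast_zsmul _ c, smul_smul, add_assoc,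
        ← add_smul, Int.ediv_mul_add_emod]

lemma card_mul_addOrderOf_le_card_sup [Finite G] (H : AddSubgroup G) (g : G) :
    Nat.card H * addOrderOf (g : G ⧸ H) ≤ Nat.card ↥(H ⊔ zmultiples g) := by
  let f : H × Fin (addOrderOf (g : G ⧸ H)) → ↥(H ⊔ zmultiples g) := fun p =>
    ⟨p.1 + (p.2 : ℕ) • g,
      add_mem (mem_sup_left p.1.2) (mem_sup_right (nsmul_mem (mem_zmultiples g) _))⟩
  have hf : Function.Injective f := by
    rintro ⟨h, j⟩ ⟨h', j'⟩ hp
    have hp : h.1 + (j : ℕ) • g = h'.1 + (j' : ℕ) • g := congrArg Subtype.val hp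
    have hj : j = j' := by
      have := congrArg (fun x : G => (x : G ⧸ H)) hp
      simp only [QuotientAddGroup.mk_add, (QuotientAddGroup.eq_zero_iff _).2 h.2,
        (QuotientAddGroup.eq_zero_iff _).2 h'.2, zero_add, QuotientAddGroup.mk_nsmul] at this
      exact Fin.ext (nsmul_injOn_Iio_addOrderOf j.2 j'.2 this)
    subst hj
    simpa using hp
  simpa [Nat.card_prod] using Nat.card_le_card_of_injective f hf

theorem prod_chainIndex_le_card [Finite G] :
    ∀ {k : ℕ} (a : Fin k → G), ∏ t, chainIndex a t ≤ Nat.card (closure (Set.range a)) := by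
  intro k
  induction k with
  | zero => intro a; simp
  | succ k ih =>
    intro a
    have hlast : Nat.card (prefixSpan a (Fin.last k)) * chainIndex a (Fin.last k) ≤
        Nat.card ↥(prefixSpan a (Fin.last k) ⊔ zmultiples (a (Fin.last k))) :=
      card_mul_addOrderOf_le_card_sup _ _
    rw [prefixSpan_last, ← closure_range_fin_succ] at hlast
    rw [Fin.prod_univ_castSucc]
    simp only [← chainIndex_castSucc]
    exact (Nat.mul_le_mul_right _ (ih _)).trans hlast

theorem prod_chainIndex_le_card_closure [Finite G] {k : ℕ} (a : Fin k → G) (S : Finset (Fin k)) :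
    ∏ t ∈ S, chainIndex a t ≤ Nat.card (closure (Set.range (a ∘ S.orderEmbOfFin rfl))) := by
  calc ∏ t ∈ S, chainIndex a t = ∏ s, chainIndex a (S.orderEmbOfFin rfl s) := by
        conv_lhs => rw [← S.map_orderEmbOfFin_univ rfl]
        rw [Finset.prod_map]
        rfl
    _ ≤ ∏ s, chainIndex (a ∘ S.orderEmbOfFin rfl) s := Finset.prod_le_prod' fun s _ =>
        Nat.le_of_dvd (chainIndex_pos _ _)
          (chainIndex_dvd_chainIndex_comp a (OrderEmbedding.strictMono _) s)
    _ ≤ _ := prod_chainIndex_le_card _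

end ChainIndex

section CardBound

open AddSubgroup

lemma card_closure_range_le_pow_mul_card_range_nsmul {G : Type*} [AddCommGroup G] [Finite G]
    {j : ℕ} (w : Fin j → G) {m : ℕ} (hm : 0 < m) :
    Nat.card (AddSubgroup.closure (Set.range w)) ≤
      m ^ j * Nat.card (nsmulAddMonoidHom m : G →+ G).range := by
  have hrep : ∀ g : closure (Set.range w),
      ∃ p : (Fin j → Fin m) × (nsmulAddMonoidHom m : G →+ G).range,
      ∑ t, ((p.1 t : ℕ)) • w t + (p.2 : G) = g := by
    rintro ⟨g, hg⟩
    obtain ⟨y, rfl⟩ := AddSubgroup.mem_closure_range_iff_of_fintype.1 hg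
    have hm' : (0 : ℤ) < m := by exact_mod_cast hm
    have hρ : ∀ t, (((y t % m).toNat : ℕ) : ℤ) = y t % m := fun t =>
      Int.toNat_of_nonneg (Int.emod_nonneg _ hm'.ne')
    refine ⟨(fun t => ⟨(y t % m).toNat, by have := Int.emod_lt_of_pos (y t) hm'; omega⟩,
      ⟨m • ∑ t, (y t / m) • w t, _, rfl⟩), ?_⟩
    simp only [Finset.smul_sum, ← Finset.sum_add_distrib]
    refine Finset.sum_congr rfl fun t _ => ?_
    rw [← natCast_zsmul _ (y t % m).toNat, hρ, ← natCast_zsmul _ m, smul_smul, ← add_smul,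
      Int.emod_add_mul_ediv]
  choose s hs using hrep
  calc Nat.card (AddSubgroup.closure (Set.range w))
      ≤ Nat.card ((Fin j → Fin m) × (nsmulAddMonoidHom m : G →+ G).range) :=
        Nat.card_le_card_of_injective s fun g g' h => Subtype.ext (by rw [← hs g, ← hs g', h])
    _ = m ^ j * Nat.card (nsmulAddMonoidHom m : G →+ G).range := by simp [Nat.card_prod]

variable {r : ℕ} {n : Fin r → ℕ} [∀ i, NeZero (n i)]

lemma card_range_nsmul_pi_zmod_le (m : ℕ) :
    Nat.card (nsmulAddMonoidHom m : ((i : Fin r) → ZMod (n i)) →+ _).range ≤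
      ∏ i, n i / (n i).gcd m := by
  let f : (nsmulAddMonoidHom m : ((i : Fin r) → ZMod (n i)) →+ _).range →
      (i : Fin r) → zmultiples (m : ZMod (n i)) := fun x i =>
    ⟨x.1 i, by
      obtain ⟨u, hu⟩ := x.2
      rw [← hu]
      simpa [nsmul_eq_mul, mul_comm] using nsmul_mem (mem_zmultiples (m : ZMod (n i))) (u i).val⟩
  have hf : Function.Injective f := fun x y h =>
    Subtype.ext (funext fun i => congrArg Subtype.val (congrFun h i))
  calc _ ≤ Nat.card ((i : Fin r) → zmultiples (m : ZMod (n i))) :=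
        Nat.card_le_card_of_injective f hf
    _ = ∏ i, n i / (n i).gcd m := by
        rw [Nat.card_pi]
        exact prod_congr rfl fun i _ => by
          rw [Nat.card_zmultiples, ZMod.addOrderOf_coe m (NeZero.ne _)]

theorem card_closure_range_le_prod (hchain : ∀ i j : Fin r, i ≤ j → n j ∣ n i) {j : ℕ}
    (w : Fin j → (i : Fin r) → ZMod (n i)) :
    Nat.card (AddSubgroup.closure (Set.range w)) ≤ ∏ i : Fin r, if (i : ℕ) < j then n i else 1 := by
  by_cases hjr : j < r
  · set m := n ⟨j, hjr⟩
    have hpow : m ^ j = ∏ i : Fin r, if (i : ℕ) < j then m else 1 := by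
      rw [prod_ite, prod_const, prod_const_one, Fin.card_filter_val_lt, min_eq_right hjr.le,
        mul_one]
    calc Nat.card (AddSubgroup.closure (Set.range w))
        ≤ m ^ j * Nat.card (nsmulAddMonoidHom m : ((i : Fin r) → ZMod (n i)) →+ _).range :=
          card_closure_range_le_pow_mul_card_range_nsmul w (NeZero.pos _)
      _ ≤ m ^ j * ∏ i, n i / (n i).gcd m := Nat.mul_le_mul_left _ (card_range_nsmul_pi_zmod_le m)
      _ = ∏ i : Fin r, if (i : ℕ) < j then n i else 1 := by
          rw [hpow, ← prod_mul_distrib]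
          refine prod_congr rfl fun i _ => ?_
          split_ifs with hi
          · have hdvd : m ∣ n i := hchain i _ (Fin.mk_le_mk.2 hi.le)
            rw [Nat.gcd_eq_right hdvd, Nat.mul_div_cancel' hdvd]
          · have hdvd : n i ∣ m := hchain _ i (Fin.mk_le_mk.2 (not_lt.1 hi))
            rw [Nat.gcd_eq_left hdvd, Nat.div_self (NeZero.pos _), one_mul]
  · calc Nat.card (AddSubgroup.closure (Set.range w)) ≤ Nat.card ((i : Fin r) → ZMod (n i)) :=
          Nat.card_le_card_of_injective _ Subtype.coe_injective
      _ = ∏ i : Fin r, if (i : ℕ) < j then n i else 1 := by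
          rw [Nat.card_pi]
          exact prod_congr rfl fun i _ => by rw [if_pos (by omega), Nat.card_zmod]

end CardBound

section ZeroSums

variable {G : Type*} [AddCommGroup G]

def boundedZeroSums {k : ℕ} (a : Fin k → G) (d : ℕ) : Set (Fin k → ℤ) :=
  (fun (m : Fin k → ℕ) (i : Fin k) => (m i : ℤ)) ''
    {m : Fin k → ℕ | (∑ i, m i • a i = 0) ∧ ∑ i, m i ≤ d}

lemma zeroSumGeneratedBy_iff {k : ℕ} {a : Fin k → G} {d : ℕ} :
    ZeroSumGeneratedBy a d ↔
      ∀ m : Fin k → ℤ, ∑ i, m i • a i = 0 → m ∈ AddSubgroup.closure (boundedZeroSums a d) := by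
  have hle : AddSubgroup.closure (boundedZeroSums a d) ≤
      (Fintype.linearCombination ℤ a).toAddMonoidHom.ker := by
    rw [AddSubgroup.closure_le]
    rintro _ ⟨u, ⟨hu, -⟩, rfl⟩
    simpa [Fintype.linearCombination_apply] using hu
  refine ⟨fun h m hm => ?_, fun h => Set.Subset.antisymm (fun m hm => ?_) h⟩
  · change m ∈ (AddSubgroup.closure (boundedZeroSums a d) : Set (Fin k → ℤ))
    rw [boundedZeroSums, h]
    exact hm
  · simpa [Fintype.linearCombination_apply] using hle hm

lemma ZeroSumGeneratedBy.mono {k : ℕ} {a : Fin k → G} {d d' : ℕ} (h : ZeroSumGeneratedBy a d)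
    (hd : d ≤ d') : ZeroSumGeneratedBy a d' := by
  rw [zeroSumGeneratedBy_iff] at h ⊢
  refine fun m hm => AddSubgroup.closure_mono ?_ (h m hm)
  exact Set.image_mono fun u hu => ⟨hu.1, hu.2.trans hd⟩

lemma zeroSumGeneratedBy_comp_iff {H F : Type*} [AddCommGroup H] [FunLike F G H]
    [AddMonoidHomClass F G H] {f : F} (hf : Function.Injective f) {k : ℕ} {a : Fin k → G}
    {d : ℕ} : ZeroSumGeneratedBy (f ∘ a) d ↔ ZeroSumGeneratedBy a d := by
  simp only [ZeroSumGeneratedBy, Function.comp_apply, ← map_nsmul, ← map_zsmul, ← map_sum,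
    map_eq_zero_iff f hf]

def snocZeroHom (M : Type*) [AddZeroClass M] (k : ℕ) : (Fin k → M) →+ (Fin (k + 1) → M) where
  toFun u := Fin.snoc u 0
  map_zero' := by ext i; induction i using Fin.lastCases <;> simp
  map_add' u v := by ext i; induction i using Fin.lastCases <;> simp

lemma mem_closure_boundedZeroSums_of_last_eq_zero {k : ℕ} {a : Fin (k + 1) → G} {d : ℕ}
    {m : Fin (k + 1) → ℤ} (hlast : m (Fin.last k) = 0)
    (hm : m ∘ Fin.castSucc ∈ AddSubgroup.closure (boundedZeroSums (a ∘ Fin.castSucc) d)) :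
    m ∈ AddSubgroup.closure (boundedZeroSums a d) := by
  have hsnoc : snocZeroHom ℤ k (m ∘ Fin.castSucc) = m := by
    ext i
    induction i using Fin.lastCases <;> simp [snocZeroHom, hlast]
  have := AddSubgroup.mem_map_of_mem (snocZeroHom ℤ k) hm
  rw [AddMonoidHom.map_closure, hsnoc] at this
  refine AddSubgroup.closure_mono ?_ this
  rintro _ ⟨_, ⟨u, ⟨hu, hud⟩, rfl⟩, rfl⟩
  refine ⟨Fin.snoc u 0, ⟨by simpa [Fin.sum_univ_castSucc] using hu,
    by simpa [Fin.sum_univ_castSucc] using hud⟩, ?_⟩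
  ext i
  induction i using Fin.lastCases <;> simp [snocZeroHom]

lemma exists_boundedZeroSum_last_eq_chainIndex [Finite G] {k : ℕ} (a : Fin (k + 1) → G) :
    ∃ w : Fin (k + 1) → ℕ,
      (∑ t, w t • a t = 0 ∧ ∑ t, w t ≤ ∑ t, (chainIndex a t - 1) + 1) ∧
        w (Fin.last k) = chainIndex a (Fin.last k) := by
  set c := chainIndex a (Fin.last k)
  have hc : c • a (Fin.last k) ∈ AddSubgroup.closure (Set.range (a ∘ Fin.castSucc)) := by
    rw [← prefixSpan_last, nsmul_mem_prefixSpan_iff]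
  obtain ⟨v, hv, hvsum⟩ := exists_digits (a ∘ Fin.castSucc) (neg_mem hc)
  refine ⟨Fin.snoc v c, ⟨?_, ?_⟩, by simp⟩
  · simp only [Function.comp_apply] at hvsum
    simp only [Fin.sum_univ_castSucc, Fin.snoc_castSucc, Fin.snoc_last]
    rw [hvsum, neg_add_cancel]
  · have hv' : ∑ t : Fin k, v t ≤ ∑ t : Fin k, (chainIndex a t.castSucc - 1) :=
      Finset.sum_le_sum fun t _ => by have := hv t; rw [chainIndex_castSucc] at this; omega
    have := chainIndex_pos a (Fin.last k)
    simp only [Fin.sum_univ_castSucc, Fin.snoc_castSucc, Fin.snoc_last]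
    omega

theorem zeroSumGeneratedBy_chainIndex [Finite G] :
    ∀ {k : ℕ} (a : Fin k → G), ZeroSumGeneratedBy a (∑ t, (chainIndex a t - 1) + 1) := by
  intro k
  induction k with
  | zero =>
    intro a
    rw [zeroSumGeneratedBy_iff]
    intro m _
    rw [Subsingleton.elim m 0]
    exact zero_mem _
  | succ k ih =>
    intro a
    rw [zeroSumGeneratedBy_iff]
    intro m hm
    obtain ⟨w, hw, hw_last⟩ := exists_boundedZeroSum_last_eq_chainIndex a
    set w' : Fin (k + 1) → ℤ := fun i => (w i : ℤ)
    have hw' : w' ∈ AddSubgroup.closure (boundedZeroSums a _) :=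
      AddSubgroup.subset_closure ⟨w, hw, rfl⟩
    obtain ⟨q, hq⟩ := chainIndex_last_dvd_of_sum_eq_zero hm
    have hlast : (m - q • w') (Fin.last k) = 0 := by simp [w', hq, hw_last, mul_comm]
    have hzero : Fintype.linearCombination ℤ a (m - q • w') = 0 := by
      have hw0 : ∑ t, w' t • a t = 0 := by simpa [w', natCast_zsmul] using hw.1
      rw [map_sub, map_zsmul, Fintype.linearCombination_apply, Fintype.linearCombination_apply,
        hm, hw0, smul_zero, sub_zero]
    rw [Fintype.linearCombination_apply, Fin.sum_univ_castSucc, hlast, zero_smul,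
      add_zero] at hzero
    have hrest : m - q • w' ∈
        AddSubgroup.closure (boundedZeroSums a (∑ t, (chainIndex a t - 1) + 1)) := by
      refine mem_closure_boundedZeroSums_of_last_eq_zero hlast
        (zeroSumGeneratedBy_iff.1 ((ih _).mono ?_) _ hzero)
      simp only [Fin.sum_univ_castSucc (f := fun t => chainIndex a t - 1), chainIndex_castSucc]
      omega
    simpa using add_mem hrest (zsmul_mem hw' q)

end ZeroSums

theorem zeroSum_generated_dstar_add_one_general
    {G : Type*} [AddCommGroup G]
    (r : ℕ) (n : Fin r → ℕ)
    (hgt : ∀ i, 1 < n i)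
    (hchain : ∀ i j : Fin r, i ≤ j → n j ∣ n i)
    (hiso : Nonempty (G ≃+ ((i : Fin r) → ZMod (n i))))
    (k : ℕ) (a : Fin k → G) :
    ZeroSumGeneratedBy a ((∑ i, (n i - 1)) + 1) := by
  obtain ⟨e⟩ := hiso
  have : ∀ i, NeZero (n i) := fun i => ⟨by have := hgt i; omega⟩
  rw [← zeroSumGeneratedBy_comp_iff e.injective]
  have hbound := sum_sub_one_le_of_forall_prod_le (chainIndex_pos (e ∘ a))
    (fun i => NeZero.pos (n i)) fun S =>
      (prod_chainIndex_le_card_closure (e ∘ a) S).trans (card_closure_range_le_prod hchain _)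
  exact (zeroSumGeneratedBy_chainIndex (e ∘ a)).mono (by omega)

/-- For a finite abelian group `G` with invariant factors `n_1,…,n_r` and any sequence
`a_1,…,a_k` of elements of `G`, the abelian group `𝓖(a_1,…,a_k)` is generated by
`{m ∈ 𝓑(a_1,…,a_k) : |m| ≤ d*(G) + 1}`, where `d*(G) = (n_1 - 1) + … + (n_r - 1)`. -/
theorem zeroSum_generated_dstar_add_one
    {G : Type*} [AddCommGroup G] [Fintype G]
    (r : ℕ) (n : Fin r → ℕ)
    (hgt : ∀ i, 1 < n i)
    (hchain : ∀ i j : Fin r, i ≤ j → n j ∣ n i)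
    (hiso : Nonempty (G ≃+ ((i : Fin r) → ZMod (n i))))
    (k : ℕ) (a : Fin k → G) :
    ZeroSumGeneratedBy a ((∑ i, (n i - 1)) + 1) :=
  zeroSum_generated_dstar_add_one_general r n hgt hchain hiso k a
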